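/- arXiv:1710.05653 — 5 statements merged into one kernel-verified Lean document; each statement's English description precedes it below -/
import Mathlib

section
/- Let q > 2 be a real number. The function f defined on (0,1) by f(t) = (1 − t^q)^{2/q − 1} · t^q / (1 − (1 − t^q)^{2/q}) is strictly increasing on the interval (0,1). -/
/-- Strict weighted AM-GM in the needed form. -/
lemma key_amgm {b v : ℝ} (hb0 : 0 < b) (hb1 : b < 1) (hv0 : 0 < v) (hv1 : v < 1) :
    v ^ (1 - b) < b + (1 - b) * v := by
  have hlog : Real.log v ≠ 0 := ne_of_lt (Real.log_neg hv0 hv1)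
  have h := strictConvexOn_exp.2 (Set.mem_univ (Real.log v)) (Set.mem_univ 0)
    hlog (by linarith : (0:ℝ) < 1 - b) hb0 (by ring)
  simp only [smul_eq_mul, mul_zero, add_zero, Real.exp_zero, mul_one, Real.exp_log hv0] at h
  rw [Real.rpow_def_of_pos hv0, mul_comm (Real.log v)]
  linarith

lemma key_numer {b v : ℝ} (hb0 : 0 < b) (hb1 : b < 1) (hv0 : 0 < v) (hv1 : v < 1) :
    0 < b * v ^ (b - 1) + (1 - b) * v ^ b - 1 := by
  have h := key_amgm hb0 hb1 hv0 hv1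
  have hp : (0:ℝ) < v ^ (b - 1) := Real.rpow_pos_of_pos hv0 _
  have h1 : v ^ (1 - b) * v ^ (b - 1) = 1 := by
    rw [← Real.rpow_add hv0]; norm_num
  have h2 : v * v ^ (b - 1) = v ^ b := by
    nth_rewrite 1 [← Real.rpow_one v]
    rw [← Real.rpow_add hv0]; ring_nf
  nlinarith [mul_lt_mul_of_pos_right h hp]

lemma G_strictMono {b : ℝ} (hb0 : 0 < b) (hb1 : b < 1) :
    StrictMonoOn (fun v : ℝ => (v ^ b - v) / (1 - v)) (Set.Ioo 0 1) := by
  have hder : ∀ v ∈ Set.Ioo (0:ℝ) 1, HasDerivAt (fun v : ℝ => (v ^ b - v) / (1 - v))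
      (((b * v ^ (b - 1) - 1) * (1 - v) - (v ^ b - v) * (-1)) / (1 - v) ^ 2) v := by
    intro v hv
    have hN : HasDerivAt (fun v : ℝ => v ^ b - v) (b * v ^ (b - 1) - 1) v :=
      (Real.hasDerivAt_rpow_const (Or.inl hv.1.ne')).sub (hasDerivAt_id v)
    have hD : HasDerivAt (fun v : ℝ => 1 - v) (-1) v := by
      simpa using (hasDerivAt_id v).const_sub 1
    exact hN.div hD (by linarith [hv.2] : (1:ℝ) - v ≠ 0)
  apply strictMonoOn_of_deriv_pos (convex_Ioo 0 1)
  · exact fun v hv => (hder v hv).continuousAt.continuousWithinAt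
  · intro v hv
    rw [interior_Ioo] at hv
    rw [(hder v hv).deriv]
    have h2 : v * v ^ (b - 1) = v ^ b := by
      nth_rewrite 1 [← Real.rpow_one v]
      rw [← Real.rpow_add hv.1]; ring_nf
    have hnum := key_numer hb0 hb1 hv.1 hv.2
    have hden : (0:ℝ) < (1 - v) ^ 2 := by nlinarith [hv.2]
    apply div_pos _ hden
    nlinarith

lemma ident {q v : ℝ} (hq : 2 < q) (hv0 : 0 < v) (hv1 : v < 1) :
    v ^ (2/q - 1) * (1 - v) / (1 - v ^ (2/q)) = (1 - v) / (v ^ (1 - 2/q) - v) := by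
  have hq0 : 0 < q := by linarith
  have hA : v ^ (2/q) < 1 := Real.rpow_lt_one hv0.le hv1 (by positivity)
  have hB : v < v ^ (1 - 2/q) := by
    have hlt : 1 - 2/q < 1 := by nlinarith [div_pos (by norm_num : (0:ℝ)<2) hq0]
    have h := Real.rpow_lt_rpow_of_exponent_gt hv0 hv1 hlt
    rwa [Real.rpow_one] at h
  rw [div_eq_div_iff (by linarith) (by linarith)]
  have e1 : v ^ (2/q-1) * v ^ (1-2/q) = 1 := by rw [← Real.rpow_add hv0]; norm_num
  have e2 : v ^ (2/q-1) * v = v ^ (2/q) := by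
    nth_rewrite 2 [← Real.rpow_one v]
    rw [← Real.rpow_add hv0]; ring_nf
  have e3 : v ^ (2/q-1) * (v ^ (1-2/q) - v) = 1 - v ^ (2/q) := by
    rw [mul_sub, e1, e2]
  linear_combination (1 - v) * e3

theorem strictMonoOn_ratio (q : ℝ) (hq : 2 < q) :
    StrictMonoOn
      (fun t : ℝ => (1 - t ^ q) ^ (2 / q - 1) * t ^ q / (1 - (1 - t ^ q) ^ (2 / q)))
      (Set.Ioo 0 1) := by
  have hq0 : 0 < q := by linarith
  have hb0 : 0 < 1 - 2/q := by
    have : 2/q < 1 := (div_lt_one hq0).mpr hq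
    linarith
  have hb1 : 1 - 2/q < 1 := by have : 0 < 2/q := by positivity
                               linarith
  intro s hs t ht hst
  obtain ⟨hs0, hs1⟩ := hs
  obtain ⟨ht0, ht1⟩ := ht
  have hu0 : 0 < s ^ q := Real.rpow_pos_of_pos hs0 q
  have hw1 : t ^ q < 1 := Real.rpow_lt_one ht0.le ht1 hq0
  have huw : s ^ q < t ^ q := Real.rpow_lt_rpow hs0.le hst hq0
  set vs := 1 - s ^ q with hvs
  set vt := 1 - t ^ q with hvt
  have hvs0 : 0 < vs := by simp only [hvs]; linarith
  have hvs1 : vs < 1 := by simp only [hvs]; linarith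
  have hvt0 : 0 < vt := by simp only [hvt]; linarith
  have hvt1 : vt < 1 := by simp only [hvt]; linarith
  have hvtvs : vt < vs := by simp only [hvs, hvt]; linarith
  have hfs : vs ^ (2/q - 1) * (s ^ q) / (1 - vs ^ (2/q))
      = ((vs ^ (1 - 2/q) - vs) / (1 - vs))⁻¹ := by
    rw [inv_div]
    have : (s : ℝ) ^ q = 1 - vs := by simp [hvs]
    rw [this]
    exact ident hq hvs0 hvs1
  have hft : vt ^ (2/q - 1) * (t ^ q) / (1 - vt ^ (2/q))
      = ((vt ^ (1 - 2/q) - vt) / (1 - vt))⁻¹ := by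
    rw [inv_div]
    have : (t : ℝ) ^ q = 1 - vt := by simp [hvt]
    rw [this]
    exact ident hq hvt0 hvt1
  simp only []
  rw [hfs, hft]
  have hGlt : (vt ^ (1 - 2/q) - vt) / (1 - vt) < (vs ^ (1 - 2/q) - vs) / (1 - vs) :=
    G_strictMono hb0 hb1 ⟨hvt0, hvt1⟩ ⟨hvs0, hvs1⟩ hvtvs
  have hGpos : 0 < (vt ^ (1 - 2/q) - vt) / (1 - vt) := by
    apply div_pos _ (by linarith)
    have h := Real.rpow_lt_rpow_of_exponent_gt hvt0 hvt1 hb1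
    rw [Real.rpow_one] at h
    linarith
  exact inv_strictAnti₀ hGpos hGlt
end

section
/- Let q > 2 be a real number. The function g defined on [0,1) by g(t) = q (1 − (1 − t^q)^{2/q}) − 2 t^q is strictly increasing on (0,1) and satisfies g(0) = 0; in particular g(t) > 0 for every t ∈ (0,1). -/
open Real Set

theorem strictMonoOn_and_pos (q : ℝ) (hq : 2 < q) :
    StrictMonoOn (fun t : ℝ => q * (1 - (1 - t ^ q) ^ (2 / q)) - 2 * t ^ q) (Set.Ioo 0 1) ∧
    (q * (1 - (1 - (0 : ℝ) ^ q) ^ (2 / q)) - 2 * (0 : ℝ) ^ q = 0) ∧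
    ∀ t ∈ Set.Ioo (0 : ℝ) 1, 0 < q * (1 - (1 - t ^ q) ^ (2 / q)) - 2 * t ^ q := by
  have hq0 : (0:ℝ) < q := by linarith
  set g : ℝ → ℝ := fun t => q * (1 - (1 - t ^ q) ^ (2 / q)) - 2 * t ^ q with hg
  -- continuity on Ico 0 1
  have hcont : ContinuousOn g (Set.Ico 0 1) := by
    intro x hx
    have hx1 : x ^ q < 1 := by
      rcases eq_or_lt_of_le hx.1 with h | h
      · rw [← h, Real.zero_rpow (by positivity)]; norm_num
      · exact Real.rpow_lt_one hx.1 hx.2 hq0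
    have c1 : ContinuousAt (fun t : ℝ => t ^ q) x :=
      Real.continuousAt_rpow_const x q (Or.inr hq0.le)
    have c4 : ContinuousAt (fun t : ℝ => 1 - t ^ q) x := continuousAt_const.sub c1
    have c3 : ContinuousAt (fun t : ℝ => (1 - t ^ q) ^ (2 / q)) x :=
      c4.rpow_const (Or.inl (by linarith))
    have c5 : ContinuousAt (fun t : ℝ => 1 - (1 - t ^ q) ^ (2 / q)) x :=
      continuousAt_const.sub c3
    have c6 : ContinuousAt g x := by
      simp only [hg]
      exact (c5.const_mul q).sub (c1.const_mul 2)
    exact c6.continuousWithinAt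
  -- derivative positivity on the open interval
  have hderiv : ∀ x ∈ Set.Ioo (0:ℝ) 1, 0 < deriv g x := by
    intro x hx
    have hx0 : 0 < x := hx.1
    have hxq : 0 < x ^ q := Real.rpow_pos_of_pos hx0 q
    have hxq1 : x ^ q < 1 := Real.rpow_lt_one hx0.le hx.2 hq0
    have hb : 0 < 1 - x ^ q := by linarith
    have hu : HasDerivAt (fun t : ℝ => t ^ q) (q * x ^ (q - 1)) x :=
      Real.hasDerivAt_rpow_const (Or.inl hx0.ne')
    have hinner : HasDerivAt (fun t : ℝ => 1 - t ^ q) (0 - q * x ^ (q - 1)) x :=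
      (hasDerivAt_const x (1:ℝ)).sub hu
    have houter : HasDerivAt (fun y : ℝ => y ^ (2 / q))
        (2 / q * (1 - x ^ q) ^ (2 / q - 1)) (1 - x ^ q) :=
      Real.hasDerivAt_rpow_const (Or.inl hb.ne')
    have hcomp := houter.comp x hinner
    have hG : HasDerivAt g
        (q * (0 - 2 / q * (1 - x ^ q) ^ (2 / q - 1) * (0 - q * x ^ (q - 1)))
          - 2 * (q * x ^ (q - 1))) x :=
      (((hasDerivAt_const x (1:ℝ)).sub hcomp).const_mul q).sub (hu.const_mul 2)
    rw [hG.deriv]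
    have hT : 0 < x ^ (q - 1) := Real.rpow_pos_of_pos hx0 _
    have hA : 1 < (1 - x ^ q) ^ (2 / q - 1) := by
      rw [Real.one_lt_rpow_iff_of_pos hb]
      right
      constructor
      · linarith
      · have : 2 / q < 1 := (div_lt_one hq0).mpr hq
        linarith
    have hrw : q * (0 - 2 / q * (1 - x ^ q) ^ (2 / q - 1) * (0 - q * x ^ (q - 1)))
          - 2 * (q * x ^ (q - 1))
        = 2 * q * x ^ (q - 1) * ((1 - x ^ q) ^ (2 / q - 1) - 1) := by
      field_simp
      ring
    rw [hrw]
    exact mul_pos (mul_pos (mul_pos two_pos hq0) hT) (sub_pos.mpr hA)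
  have hmono : StrictMonoOn g (Set.Ico 0 1) := by
    apply strictMonoOn_of_deriv_pos (convex_Ico 0 1) hcont
    rwa [interior_Ico]
  have hzero : g 0 = 0 := by
    simp only [hg, Real.zero_rpow hq0.ne', sub_zero, Real.one_rpow]
    ring
  refine ⟨hmono.mono (fun x hx => ⟨hx.1.le, hx.2⟩), by simpa using hzero, ?_⟩
  intro t ht
  have := hmono (by constructor <;> norm_num) ⟨ht.1.le, ht.2⟩ ht.1
  rw [hzero] at this
  exact this
end

section
/- Let q > 2 be a real number. For every t ∈ (0,1) one has (1 − t^q)^{2/q − 1} · t^q / (1 − (1 − t^q)^{2/q}) > q/2. -/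
/-!
Put `s = 1 - t ^ q` and `α = 2 / q ∈ (0, 1)`. The claim becomes `1 - s ^ α < α s ^ (α - 1) (1 - s)`,
the strict tangent-line bound at `s` for the strictly concave function `x ↦ x ^ α`, evaluated at `1`.
-/

/-- Bernoulli's inequality for the exponent `1 - α`, multiplied through by `s ^ (α - 1)`. -/
theorem Real.one_sub_rpow_lt_mul_rpow_sub_one_mul {s α : ℝ} (hs : 0 < s) (hs1 : s ≠ 1)
    (hα0 : 0 < α) (hα1 : α < 1) : 1 - s ^ α < α * s ^ (α - 1) * (1 - s) := by
  have bernoulli : s ^ (1 - α) < 1 + (1 - α) * (s - 1) := by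
    simpa using rpow_one_add_lt_one_add_mul_self (s := s - 1) (by linarith) (sub_ne_zero.2 hs1)
      (p := 1 - α) (by linarith) (by linarith)
  have hcancel : s ^ (α - 1) * s ^ (1 - α) = 1 := by
    rw [← Real.rpow_add hs]; norm_num
  have hmul : s ^ (α - 1) * s = s ^ α := by
    rw [← Real.rpow_add_one hs.ne']; ring_nf
  have := mul_lt_mul_of_pos_left bernoulli (Real.rpow_pos_of_pos hs (α - 1))
  linear_combination this - hcancel + hmul

theorem ratio_gt_half_q (q : ℝ) (hq : 2 < q) :
    ∀ t ∈ Set.Ioo (0 : ℝ) 1,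
      (1 - t ^ q) ^ (2 / q - 1) * t ^ q / (1 - (1 - t ^ q) ^ (2 / q)) > q / 2 := by
  rintro t ⟨ht0, ht1⟩
  have hq0 : 0 < q := by linarith
  have hx0 : 0 < t ^ q := Real.rpow_pos_of_pos ht0 q
  have hx1 : t ^ q < 1 := Real.rpow_lt_one ht0.le ht1 hq0
  have hα1 : 2 / q < 1 := (div_lt_one hq0).2 hq
  have key := Real.one_sub_rpow_lt_mul_rpow_sub_one_mul (s := 1 - t ^ q) (by linarith)
    (by linarith) (by positivity) hα1
  have hden : 0 < 1 - (1 - t ^ q) ^ (2 / q) := by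
    linarith [Real.rpow_lt_one (by linarith : 0 ≤ 1 - t ^ q) (by linarith) (by positivity : 0 < 2 / q)]
  rw [gt_iff_lt, lt_div_iff₀ hden]
  calc q / 2 * (1 - (1 - t ^ q) ^ (2 / q))
      < q / 2 * (2 / q * (1 - t ^ q) ^ (2 / q - 1) * (1 - (1 - t ^ q))) :=
        mul_lt_mul_of_pos_left key (by positivity)
    _ = (1 - t ^ q) ^ (2 / q - 1) * t ^ q := by field_simp; ring
end

section
/- Set K₁ = (n−2)² ∫_{ℝⁿ} ‖y‖² (1 + ‖y‖²)^{−n} dy. Then there exist constants C > 0 and ε₀ > 0 such that for all 0 < ε < ε₀ one has | ∫_{ℝⁿ} ‖∇ω_ε(x)‖² dx − K₁ | ≤ C ε^{(n−2)/2}. -/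
open MeasureTheory Filter

set_option maxHeartbeats 4000000 in
theorem gradient_norm_sq_integral_asymptotics (n : ℕ) (hn : 4 ≤ n)
    (ζ : EuclideanSpace ℝ (Fin n) → ℝ)
    (hζsmooth : ContDiff ℝ (⊤ : ℕ∞) ζ) (hζsupp : HasCompactSupport ζ)
    (hζ01 : ∀ x, 0 ≤ ζ x ∧ ζ x ≤ 1) (hζone : ∀ᶠ x in nhds 0, ζ x = 1)
    (ω : ℝ → EuclideanSpace ℝ (Fin n) → ℝ)
    (hω : ∀ ε x, ω ε x =
      ε ^ (((n : ℝ) - 2) / 4) * ζ x / (ε + ‖x‖ ^ 2) ^ (((n : ℝ) - 2) / 2))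
    (K₁ : ℝ)
    (hK₁ : K₁ = ((n : ℝ) - 2) ^ 2 *
      ∫ y : EuclideanSpace ℝ (Fin n), ‖y‖ ^ 2 * (1 + ‖y‖ ^ 2) ^ (-(n : ℝ))) :
    ∃ C > (0 : ℝ), ∃ ε₀ > (0 : ℝ), ∀ ε : ℝ, 0 < ε → ε < ε₀ →
      |(∫ x, ‖gradient (ω ε) x‖ ^ 2) - K₁| ≤ C * ε ^ (((n : ℝ) - 2) / 2) := by
  classical
  have hn4 : (4 : ℝ) ≤ (n : ℝ) := by exact_mod_cast hn
  set s : ℝ := ((n : ℝ) - 2) / 2 with hs_def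
  set q1 : ℝ := ((n : ℝ) - 2) / 4 with hq1_def
  have hs1 : (1 : ℝ) ≤ s := by rw [hs_def]; linarith
  have hs0 : (0 : ℝ) ≤ s := by linarith
  have hq10 : (0 : ℝ) ≤ q1 := by rw [hq1_def]; linarith
  have h2q1 : 2 * q1 = s := by rw [hq1_def, hs_def]; ring
  have sq_rpow : ∀ (u t : ℝ), 0 ≤ u → (u ^ t) ^ 2 = u ^ (2 * t) := by
    intro u t hu
    rw [← Real.rpow_natCast (u ^ t) 2, ← Real.rpow_mul hu]
    norm_num [mul_comm]
  -- the radius where ζ = 1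
  obtain ⟨ρ, hρ0, hζρ⟩ : ∃ ρ > (0 : ℝ), ∀ y : EuclideanSpace ℝ (Fin n), ‖y‖ < ρ → ζ y = 1 := by
    rcases Metric.eventually_nhds_iff.mp hζone with ⟨δ, hδ, h⟩
    exact ⟨δ, hδ, fun y hy => h (by simpa [dist_zero_right] using hy)⟩
  -- the radius containing the support
  obtain ⟨R, hρR, hRsupp⟩ : ∃ R : ℝ, ρ ≤ R ∧
      tsupport ζ ⊆ Metric.closedBall (0 : EuclideanSpace ℝ (Fin n)) R := by
    rcases hζsupp.isBounded.subset_closedBall 0 with ⟨R', hR'⟩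
    exact ⟨max ρ R', le_max_left _ _,
      hR'.trans (Metric.closedBall_subset_closedBall (le_max_right _ _))⟩
  -- bound on the derivative of ζ
  obtain ⟨L, hL0, hL⟩ : ∃ L ≥ (0 : ℝ), ∀ x, ‖fderiv ℝ ζ x‖ ≤ L := by
    obtain ⟨L, hL⟩ := Continuous.bounded_above_of_compact_support
      ((hζsmooth.fderiv_right (m := (⊤ : ℕ∞)) (by simp)).continuous) (hζsupp.fderiv (𝕜 := ℝ))
    exact ⟨L, (norm_nonneg _).trans (hL 0), hL⟩
  set Bc : ℝ := 2 * s * (ρ ^ 2) ^ (-s - 1) * R + (ρ ^ 2) ^ (-s) * L with hBc_def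
  -- the comparison function φ
  set ψ : EuclideanSpace ℝ (Fin n) → ℝ :=
    fun x => ((n : ℝ) - 2) ^ 2 * (max ρ ‖x‖) ^ (-(2 * (n : ℝ) - 2)) with hψ_def
  set φ : EuclideanSpace ℝ (Fin n) → ℝ := fun x =>
    Set.indicator (Metric.closedBall (0 : EuclideanSpace ℝ (Fin n)) R \ Metric.ball 0 ρ)
      (fun _ => Bc ^ 2) x + ψ x with hφ_def
  have hψ_nonneg : ∀ x, 0 ≤ ψ x := fun x =>
    mul_nonneg (sq_nonneg _) (Real.rpow_nonneg (le_max_of_le_left hρ0.le) _)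
  have hφ_nonneg : ∀ x, 0 ≤ φ x := fun x =>
    add_nonneg (Set.indicator_nonneg (fun _ _ => sq_nonneg _) x) (hψ_nonneg x)
  have hexp : (n : ℝ) < 2 * (n : ℝ) - 2 := by linarith
  have hbound_int : Integrable
      (fun x : EuclideanSpace ℝ (Fin n) => (1 + ‖x‖) ^ (-(2 * (n : ℝ) - 2))) := by
    apply integrable_one_add_norm
    rw [finrank_euclideanSpace_fin]
    exact hexp
  have hmax_cont : Continuous (fun x : EuclideanSpace ℝ (Fin n) => max ρ ‖x‖) :=
    continuous_const.max continuous_norm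
  have hmax_pos : ∀ x : EuclideanSpace ℝ (Fin n), (0:ℝ) < max ρ ‖x‖ :=
    fun x => lt_max_of_lt_left hρ0
  have hψ_cont : Continuous ψ :=
    continuous_const.mul (hmax_cont.rpow_const (fun x => Or.inl (hmax_pos x).ne'))
  have hψ_le : ∀ x, ψ x ≤ (((n : ℝ) - 2) ^ 2 * (ρ / (1 + ρ)) ^ (-(2 * (n : ℝ) - 2)))
      * (1 + ‖x‖) ^ (-(2 * (n : ℝ) - 2)) := by
    intro x
    have h1 : (0:ℝ) < ρ / (1 + ρ) := div_pos hρ0 (by linarith)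
    have h2 : ρ / (1 + ρ) * (1 + ‖x‖) ≤ max ρ ‖x‖ := by
      rw [div_mul_eq_mul_div, div_le_iff₀ (by linarith)]
      have h3 : ρ ≤ max ρ ‖x‖ := le_max_left _ _
      have h4 : ‖x‖ ≤ max ρ ‖x‖ := le_max_right _ _
      nlinarith [norm_nonneg x]
    have h5 : (max ρ ‖x‖) ^ (-(2 * (n : ℝ) - 2)) ≤
        (ρ / (1 + ρ) * (1 + ‖x‖)) ^ (-(2 * (n : ℝ) - 2)) :=
      Real.rpow_le_rpow_of_nonpos (by positivity) h2 (by linarith)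
    calc ψ x ≤ ((n : ℝ) - 2) ^ 2 * ((ρ / (1 + ρ) * (1 + ‖x‖)) ^ (-(2 * (n : ℝ) - 2))) := by
          exact mul_le_mul_of_nonneg_left h5 (sq_nonneg _)
      _ = (((n : ℝ) - 2) ^ 2 * (ρ / (1 + ρ)) ^ (-(2 * (n : ℝ) - 2)))
          * (1 + ‖x‖) ^ (-(2 * (n : ℝ) - 2)) := by
          rw [Real.mul_rpow h1.le (by positivity)]; ring
  have hψ_int : Integrable ψ := by
    refine Integrable.mono' (hbound_int.const_mul
      (((n : ℝ) - 2) ^ 2 * (ρ / (1 + ρ)) ^ (-(2 * (n : ℝ) - 2))))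
      hψ_cont.aestronglyMeasurable (ae_of_all _ fun x => ?_)
    rw [Real.norm_eq_abs, abs_of_nonneg (hψ_nonneg x)]
    exact hψ_le x
  have hφ_int : Integrable φ := by
    refine Integrable.add ?_ hψ_int
    rw [integrable_indicator_iff (measurableSet_closedBall.diff measurableSet_ball)]
    exact integrableOn_const ((measure_mono Set.diff_subset).trans_lt
      measure_closedBall_lt_top).ne
  refine ⟨(∫ x, φ x) + 1, by have h0 : (0:ℝ) ≤ ∫ x, φ x := integral_nonneg hφ_nonneg; linarith, 1, one_pos, ?_⟩
  intro ε hε hε1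
  have hεs : (0:ℝ) ≤ ε ^ s := Real.rpow_nonneg hε.le s
  have hεq : (0:ℝ) ≤ ε ^ q1 := Real.rpow_nonneg hε.le q1
  have hBpos : ∀ x : EuclideanSpace ℝ (Fin n), (0:ℝ) < ε + ‖x‖ ^ 2 := fun x => by positivity
  set D : EuclideanSpace ℝ (Fin n) → (EuclideanSpace ℝ (Fin n) →L[ℝ] ℝ) := fun x =>
    (ε ^ q1 * ζ x * (-s * (ε + ‖x‖ ^ 2) ^ (-s - 1) * 2)) • (innerSL ℝ x)
      + ((ε + ‖x‖ ^ 2) ^ (-s) * ε ^ q1) • fderiv ℝ ζ x with hD_def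
  have hωeq : ω ε = fun x => ε ^ q1 * ζ x * (ε + ‖x‖ ^ 2) ^ (-s) := by
    funext x
    rw [hω ε x, div_eq_mul_inv, ← Real.rpow_neg (hBpos x).le]
  have hD : ∀ x, HasFDerivAt (ω ε) (D x) x := by
    intro x
    rw [hωeq]
    have hB : HasFDerivAt (fun x : EuclideanSpace ℝ (Fin n) => ε + ‖x‖ ^ 2)
        (2 • innerSL ℝ x) x := by
      simpa using (hasStrictFDerivAt_norm_sq x).hasFDerivAt.const_add ε
    have hpow : HasFDerivAt (fun x : EuclideanSpace ℝ (Fin n) => (ε + ‖x‖ ^ 2) ^ (-s))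
        ((-s * (ε + ‖x‖ ^ 2) ^ (-s - 1)) • (2 • innerSL ℝ x)) x :=
      hB.rpow_const (Or.inl (hBpos x).ne')
    have hζ' : HasFDerivAt (fun x : EuclideanSpace ℝ (Fin n) => ε ^ q1 * ζ x)
        (ε ^ q1 • fderiv ℝ ζ x) x :=
      ((hζsmooth.differentiable (by simp) x).hasFDerivAt).const_mul (ε ^ q1)
    refine (hζ'.mul hpow).congr_fderiv ?_
    ext y
    simp only [hD_def, ContinuousLinearMap.add_apply, ContinuousLinearMap.smul_apply,
      innerSL_apply_apply, smul_eq_mul, nsmul_eq_mul, Nat.cast_ofNat]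
    ring
  have hgrad : ∀ x, ‖gradient (ω ε) x‖ = ‖D x‖ := by
    intro x
    rw [show gradient (ω ε) x = (InnerProductSpace.toDual ℝ _).symm (fderiv ℝ (ω ε) x) from rfl,
      (hD x).fderiv, LinearIsometryEquiv.norm_map]
  set mn : EuclideanSpace ℝ (Fin n) → ℝ := fun x =>
    ((n : ℝ) - 2) ^ 2 * (ε ^ s * (‖x‖ ^ 2 * (ε + ‖x‖ ^ 2) ^ (-(n : ℝ)))) with hmn_def
  have hmn_nonneg : ∀ x, 0 ≤ mn x := fun x => by
    have h := (hBpos x).le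
    rw [hmn_def]
    positivity
  have hζball : ∀ x : EuclideanSpace ℝ (Fin n), ‖x‖ < ρ → ζ x = 1 ∧ fderiv ℝ ζ x = 0 := by
    intro x hx
    have hop : IsOpen {y : EuclideanSpace ℝ (Fin n) | ‖y‖ < ρ} :=
      isOpen_lt continuous_norm continuous_const
    have hev : ζ =ᶠ[nhds x] fun _ => 1 := by
      filter_upwards [hop.mem_nhds hx] with y hy using hζρ y hy
    exact ⟨hζρ x hx, by rw [hev.fderiv_eq]; exact fderiv_const_apply 1⟩
  have hval : ∀ x : EuclideanSpace ℝ (Fin n), ‖x‖ < ρ → ‖gradient (ω ε) x‖ ^ 2 = mn x := by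
    intro x hx
    obtain ⟨h1, h0⟩ := hζball x hx
    rw [hgrad x]
    simp only [hD_def, h1, h0, smul_zero, add_zero, mul_one]
    rw [norm_smul (ε ^ q1 * (-s * (ε + ‖x‖ ^ 2) ^ (-s - 1) * 2)) ((innerSL ℝ) x),
      innerSL_apply_norm, Real.norm_eq_abs]
    have hT : (0:ℝ) ≤ (ε + ‖x‖ ^ 2) ^ (-s - 1) := Real.rpow_nonneg (hBpos x).le _
    have habs : |ε ^ q1 * (-s * (ε + ‖x‖ ^ 2) ^ (-s - 1) * 2)|
        = ε ^ q1 * (s * (ε + ‖x‖ ^ 2) ^ (-s - 1) * 2) := by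
      rw [show ε ^ q1 * (-s * (ε + ‖x‖ ^ 2) ^ (-s - 1) * 2)
          = -(ε ^ q1 * (s * (ε + ‖x‖ ^ 2) ^ (-s - 1) * 2)) by ring, abs_neg,
        abs_of_nonneg (by positivity)]
    rw [habs, mul_pow, mul_pow, mul_pow, mul_pow, sq_rpow _ _ hε.le, sq_rpow _ _ (hBpos x).le, h2q1,
      show 2 * (-s - 1) = -(n:ℝ) by rw [hs_def]; ring, hmn_def, hs_def]
    ring
  have hannulus : ∀ x : EuclideanSpace ℝ (Fin n), ρ ≤ ‖x‖ → ‖x‖ ≤ R →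
      ‖gradient (ω ε) x‖ ^ 2 ≤ ε ^ s * Bc ^ 2 := by
    intro x hx1 hx2
    have hρ2B : ρ ^ 2 ≤ ε + ‖x‖ ^ 2 :=
      le_add_of_nonneg_of_le hε.le (pow_le_pow_left₀ hρ0.le hx1 2)
    have hρ2 : (0:ℝ) < ρ ^ 2 := by positivity
    have hT1 : (ε + ‖x‖ ^ 2) ^ (-s - 1) ≤ (ρ ^ 2) ^ (-s - 1) :=
      Real.rpow_le_rpow_of_nonpos hρ2 hρ2B (by linarith)
    have hT2 : (ε + ‖x‖ ^ 2) ^ (-s) ≤ (ρ ^ 2) ^ (-s) :=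
      Real.rpow_le_rpow_of_nonpos hρ2 hρ2B (by linarith)
    have hT0 : (0:ℝ) ≤ (ε + ‖x‖ ^ 2) ^ (-s - 1) := Real.rpow_nonneg (hBpos x).le _
    have hT0' : (0:ℝ) ≤ (ε + ‖x‖ ^ 2) ^ (-s) := Real.rpow_nonneg (hBpos x).le _
    have hDb : ‖D x‖ ≤ ε ^ q1 * Bc := by
      have habs : |ε ^ q1 * ζ x * (-s * (ε + ‖x‖ ^ 2) ^ (-s - 1) * 2)|
          = ε ^ q1 * ζ x * (s * (ε + ‖x‖ ^ 2) ^ (-s - 1) * 2) := by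
        rw [show ε ^ q1 * ζ x * (-s * (ε + ‖x‖ ^ 2) ^ (-s - 1) * 2)
            = -(ε ^ q1 * ζ x * (s * (ε + ‖x‖ ^ 2) ^ (-s - 1) * 2)) by ring, abs_neg,
          abs_of_nonneg (mul_nonneg (mul_nonneg hεq (hζ01 x).1) (by positivity))]
      have hBnn : (0:ℝ) ≤ s * ((ρ ^ 2) ^ (-s - 1)) * 2 :=
        mul_nonneg (mul_nonneg hs0 (Real.rpow_nonneg hρ2.le _)) (by norm_num)
      have h1 : ε ^ q1 * ζ x * (s * ((ε + ‖x‖ ^ 2) ^ (-s - 1)) * 2) * ‖x‖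
          ≤ ε ^ q1 * 1 * (s * ((ρ ^ 2) ^ (-s - 1)) * 2) * R := by
        refine mul_le_mul (mul_le_mul (mul_le_mul_of_nonneg_left (hζ01 x).2 hεq)
          (mul_le_mul_of_nonneg_right (mul_le_mul_of_nonneg_left hT1 hs0) (by norm_num))
          (mul_nonneg (mul_nonneg hs0 hT0) (by norm_num))
          (by rw [mul_one]; exact hεq)) hx2 (norm_nonneg x) ?_
        exact mul_nonneg (by rw [mul_one]; exact hεq) hBnn
      have h2 : (ε + ‖x‖ ^ 2) ^ (-s) * ε ^ q1 * ‖fderiv ℝ ζ x‖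
          ≤ (ρ ^ 2) ^ (-s) * ε ^ q1 * L := by
        refine mul_le_mul (mul_le_mul_of_nonneg_right hT2 hεq) (hL x) (norm_nonneg _)
          (mul_nonneg (Real.rpow_nonneg hρ2.le _) hεq)
      calc ‖D x‖ ≤ ‖(ε ^ q1 * ζ x * (-s * (ε + ‖x‖ ^ 2) ^ (-s - 1) * 2)) • (innerSL ℝ x)‖
            + ‖((ε + ‖x‖ ^ 2) ^ (-s) * ε ^ q1) • fderiv ℝ ζ x‖ := by
            simp only [hD_def]; exact norm_add_le _ _
        _ = |ε ^ q1 * ζ x * (-s * (ε + ‖x‖ ^ 2) ^ (-s - 1) * 2)| * ‖x‖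
            + |(ε + ‖x‖ ^ 2) ^ (-s) * ε ^ q1| * ‖fderiv ℝ ζ x‖ := by
            rw [norm_smul (ε ^ q1 * ζ x * (-s * (ε + ‖x‖ ^ 2) ^ (-s - 1) * 2)) ((innerSL ℝ) x),
              norm_smul ((ε + ‖x‖ ^ 2) ^ (-s) * ε ^ q1) (fderiv ℝ ζ x),
              innerSL_apply_norm, Real.norm_eq_abs, Real.norm_eq_abs]
        _ ≤ ε ^ q1 * 1 * (s * ((ρ ^ 2) ^ (-s - 1)) * 2) * R + (ρ ^ 2) ^ (-s) * ε ^ q1 * L := by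
            rw [habs, abs_of_nonneg (mul_nonneg hT0' hεq)]
            exact add_le_add h1 h2
        _ = ε ^ q1 * Bc := by rw [hBc_def]; ring
    rw [hgrad x]
    calc ‖D x‖ ^ 2 ≤ (ε ^ q1 * Bc) ^ 2 := pow_le_pow_left₀ (norm_nonneg _) hDb 2
      _ = ε ^ s * Bc ^ 2 := by rw [mul_pow, sq_rpow _ _ hε.le, h2q1]
  have hout : ∀ x : EuclideanSpace ℝ (Fin n), R < ‖x‖ → gradient (ω ε) x = 0 := by
    intro x hx
    have hop : IsOpen {y : EuclideanSpace ℝ (Fin n) | R < ‖y‖} :=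
      isOpen_lt continuous_const continuous_norm
    have hev : ω ε =ᶠ[nhds x] fun _ => 0 := by
      filter_upwards [hop.mem_nhds hx] with y hy
      have hzy : ζ y = 0 := image_eq_zero_of_notMem_tsupport fun hmem =>
        (not_le.mpr hy) (mem_closedBall_zero_iff.mp (hRsupp hmem))
      rw [hω ε y, hzy]
      simp
    rw [show gradient (ω ε) x = (InnerProductSpace.toDual ℝ _).symm (fderiv ℝ (ω ε) x) from rfl,
      hev.fderiv_eq, fderiv_const_apply 0]
    simp
  have hBcont : Continuous (fun x : EuclideanSpace ℝ (Fin n) => ε + ‖x‖ ^ 2) :=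
    continuous_const.add (continuous_norm.pow 2)
  have hDcont : Continuous D := by
    rw [hD_def]
    apply Continuous.add
    · exact Continuous.smul
        (((continuous_const.mul hζsmooth.continuous).mul
          ((continuous_const.mul (hBcont.rpow_const fun x => Or.inl (hBpos x).ne')).mul
            continuous_const)))
        (innerSL ℝ).continuous
    · exact Continuous.smul ((hBcont.rpow_const fun x => Or.inl (hBpos x).ne').mul
        continuous_const) (hζsmooth.fderiv_right (m := (⊤ : ℕ∞)) (by simp)).continuous
  have hgint : Integrable (fun x => ‖gradient (ω ε) x‖ ^ 2) := by
    have hgeq : (fun x => ‖gradient (ω ε) x‖ ^ 2) = fun x => ‖D x‖ ^ 2 :=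
      funext fun x => by rw [hgrad x]
    rw [hgeq]
    apply Continuous.integrable_of_hasCompactSupport (hDcont.norm.pow 2)
    apply HasCompactSupport.intro hζsupp
    intro x hx
    have hz : ζ x = 0 := image_eq_zero_of_notMem_tsupport hx
    have hz' : fderiv ℝ ζ x = 0 := Function.notMem_support.mp
      (fun hsx => hx (support_fderiv_subset ℝ hsx))
    simp [hD_def, hz, hz']
  have hfε_cont : Continuous (fun x : EuclideanSpace ℝ (Fin n) =>
      ‖x‖ ^ 2 * (ε + ‖x‖ ^ 2) ^ (-(n:ℝ))) :=
    (continuous_norm.pow 2).mul (hBcont.rpow_const fun x => Or.inl (hBpos x).ne')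
  have hm0 : (0:ℝ) < min ε 1 := lt_min hε one_pos
  have hfε_int : Integrable (fun x : EuclideanSpace ℝ (Fin n) =>
      ‖x‖ ^ 2 * (ε + ‖x‖ ^ 2) ^ (-(n:ℝ))) := by
    refine Integrable.mono' (hbound_int.const_mul ((min ε 1 / 2) ^ (-(n:ℝ))))
      hfε_cont.aestronglyMeasurable (ae_of_all _ fun x => ?_)
    have hx1 : (0:ℝ) < 1 + ‖x‖ := by positivity
    have hkey : min ε 1 / 2 * (1 + ‖x‖) ^ 2 ≤ ε + ‖x‖ ^ 2 := by
      have h1 : min ε 1 ≤ ε := min_le_left _ _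
      have h2 : min ε 1 ≤ 1 := min_le_right _ _
      nlinarith [norm_nonneg x, sq_nonneg (1 - ‖x‖)]
    have hBnn : (0:ℝ) ≤ (ε + ‖x‖ ^ 2) ^ (-(n:ℝ)) := Real.rpow_nonneg (hBpos x).le _
    rw [Real.norm_eq_abs, abs_of_nonneg (mul_nonneg (by positivity) hBnn)]
    calc ‖x‖ ^ 2 * (ε + ‖x‖ ^ 2) ^ (-(n:ℝ))
        ≤ (1 + ‖x‖) ^ 2 * ((min ε 1 / 2) * (1 + ‖x‖) ^ 2) ^ (-(n:ℝ)) := by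
          refine mul_le_mul (by nlinarith [norm_nonneg x]) ?_ hBnn (by positivity)
          exact Real.rpow_le_rpow_of_nonpos (by positivity) hkey
            (neg_nonpos.mpr (Nat.cast_nonneg n))
      _ = (min ε 1 / 2) ^ (-(n:ℝ)) * (1 + ‖x‖) ^ (-(2 * (n:ℝ) - 2)) := by
          rw [Real.mul_rpow (by positivity) (by positivity),
            ← Real.rpow_natCast (1 + ‖x‖) 2, ← Real.rpow_mul hx1.le, ← mul_assoc,
            mul_comm ((1 + ‖x‖) ^ ((2:ℕ):ℝ)), mul_assoc, ← Real.rpow_add hx1]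
          congr 1
          congr 1
          push_cast
          ring
  have hsq : (0:ℝ) < Real.sqrt ε := Real.sqrt_pos.mpr hε
  have hscal : (∫ x : EuclideanSpace ℝ (Fin n), ‖x‖ ^ 2 * (ε + ‖x‖ ^ 2) ^ (-(n:ℝ)))
      = ε ^ ((1:ℝ) - (n:ℝ) / 2) *
        ∫ y : EuclideanSpace ℝ (Fin n), ‖y‖ ^ 2 * (1 + ‖y‖ ^ 2) ^ (-(n:ℝ)) := by
    have h := MeasureTheory.Measure.integral_comp_smul (μ := volume)
      (fun x : EuclideanSpace ℝ (Fin n) => ‖x‖ ^ 2 * (ε + ‖x‖ ^ 2) ^ (-(n:ℝ))) (Real.sqrt ε)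
    have hptw : ∀ y : EuclideanSpace ℝ (Fin n),
        ‖Real.sqrt ε • y‖ ^ 2 * (ε + ‖Real.sqrt ε • y‖ ^ 2) ^ (-(n:ℝ))
        = ε ^ ((1:ℝ) - (n:ℝ)) * (‖y‖ ^ 2 * (1 + ‖y‖ ^ 2) ^ (-(n:ℝ))) := by
      intro y
      have h1 : ‖Real.sqrt ε • y‖ ^ 2 = ε * ‖y‖ ^ 2 := by
        rw [norm_smul, Real.norm_eq_abs, abs_of_nonneg (Real.sqrt_nonneg ε), mul_pow,
          Real.sq_sqrt hε.le]
      rw [h1, show ε + ε * ‖y‖ ^ 2 = ε * (1 + ‖y‖ ^ 2) by ring,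
        Real.mul_rpow hε.le (by positivity),
        show ε ^ ((1:ℝ) - (n:ℝ)) = ε ^ (1:ℝ) * ε ^ (-(n:ℝ)) by
          rw [← Real.rpow_add hε]; congr 1, Real.rpow_one]
      ring
    simp_rw [hptw] at h
    rw [MeasureTheory.integral_const_mul, finrank_euclideanSpace_fin,
      abs_of_nonneg (inv_nonneg.mpr (pow_nonneg (Real.sqrt_nonneg ε) n)), smul_eq_mul] at h
    have hpow : (Real.sqrt ε) ^ n = ε ^ ((n:ℝ) / 2) := by
      rw [← Real.rpow_natCast (Real.sqrt ε) n, Real.sqrt_eq_rpow,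
        ← Real.rpow_mul hε.le, show 1 / 2 * (n:ℝ) = (n:ℝ) / 2 by ring]
    have hne : ((Real.sqrt ε) ^ n : ℝ) ≠ 0 := pow_ne_zero n hsq.ne'
    have h2 : (∫ x : EuclideanSpace ℝ (Fin n), ‖x‖ ^ 2 * (ε + ‖x‖ ^ 2) ^ (-(n:ℝ)))
        = (Real.sqrt ε) ^ n * (ε ^ ((1:ℝ) - (n:ℝ)) *
          ∫ y : EuclideanSpace ℝ (Fin n), ‖y‖ ^ 2 * (1 + ‖y‖ ^ 2) ^ (-(n:ℝ))) := by
      rw [h, ← mul_assoc, mul_inv_cancel₀ hne, one_mul]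
    rw [h2, hpow, ← mul_assoc, ← Real.rpow_add hε,
      show (n:ℝ) / 2 + ((1:ℝ) - (n:ℝ)) = (1:ℝ) - (n:ℝ) / 2 by ring]
  have hmn_int : Integrable mn := by
    simp only [hmn_def]
    exact (hfε_int.const_mul (ε ^ s)).const_mul (((n:ℝ) - 2) ^ 2)
  have hKmain : (∫ x, mn x) = K₁ := by
    simp only [hmn_def]
    rw [MeasureTheory.integral_const_mul, MeasureTheory.integral_const_mul, hscal, hK₁,
      ← mul_assoc (ε ^ s), ← Real.rpow_add hε,
      show s + ((1:ℝ) - (n:ℝ) / 2) = 0 by rw [hs_def]; ring, Real.rpow_zero, one_mul]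
  have hpt : ∀ x : EuclideanSpace ℝ (Fin n),
      ‖‖gradient (ω ε) x‖ ^ 2 - mn x‖ ≤ ε ^ s * φ x := by
    intro x
    rw [Real.norm_eq_abs]
    rcases lt_or_ge ‖x‖ ρ with hx | hx
    · rw [hval x hx, sub_self, abs_zero]
      exact mul_nonneg hεs (hφ_nonneg x)
    · have hmem2 : x ∉ Metric.ball (0 : EuclideanSpace ℝ (Fin n)) ρ := by
        simp only [Metric.mem_ball, dist_zero_right, not_lt]
        exact hx
      have hψx : ψ x = ((n:ℝ) - 2) ^ 2 * ‖x‖ ^ (-(2 * (n:ℝ) - 2)) := by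
        simp only [hψ_def, max_eq_right hx]
      have hxpos : (0:ℝ) < ‖x‖ := lt_of_lt_of_le hρ0 hx
      have hmnle : mn x ≤ ε ^ s * (((n:ℝ) - 2) ^ 2 * ‖x‖ ^ (-(2 * (n:ℝ) - 2))) := by
        simp only [hmn_def]
        have h1 : (ε + ‖x‖ ^ 2) ^ (-(n:ℝ)) ≤ (‖x‖ ^ 2) ^ (-(n:ℝ)) :=
          Real.rpow_le_rpow_of_nonpos (by positivity) (le_add_of_nonneg_left hε.le)
            (neg_nonpos.mpr (Nat.cast_nonneg n))
        calc ((n:ℝ) - 2) ^ 2 * (ε ^ s * (‖x‖ ^ 2 * (ε + ‖x‖ ^ 2) ^ (-(n:ℝ))))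
            ≤ ((n:ℝ) - 2) ^ 2 * (ε ^ s * (‖x‖ ^ 2 * (‖x‖ ^ 2) ^ (-(n:ℝ)))) := by
              refine mul_le_mul_of_nonneg_left (mul_le_mul_of_nonneg_left
                (mul_le_mul_of_nonneg_left h1 (by positivity)) hεs) (sq_nonneg _)
          _ = ε ^ s * (((n:ℝ) - 2) ^ 2 * ‖x‖ ^ (-(2 * (n:ℝ) - 2))) := by
              rw [← Real.rpow_natCast ‖x‖ 2, ← Real.rpow_mul (norm_nonneg x),
                ← Real.rpow_add hxpos,
                show ((2:ℕ):ℝ) + ((2:ℕ):ℝ) * (-(n:ℝ)) = -(2 * (n:ℝ) - 2) by push_cast; ring]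
              ring
      rcases le_or_gt ‖x‖ R with hxR | hxR
      · have hmem1 : x ∈ Metric.closedBall (0 : EuclideanSpace ℝ (Fin n)) R \ Metric.ball 0 ρ := ⟨mem_closedBall_zero_iff.mpr hxR, hmem2⟩
        have hφx : φ x = Bc ^ 2 + ψ x := by
          simp only [hφ_def, Set.indicator_of_mem hmem1]
        have hg := hannulus x hx hxR
        have hgnn : (0:ℝ) ≤ ‖gradient (ω ε) x‖ ^ 2 := sq_nonneg _
        have habs2 : |‖gradient (ω ε) x‖ ^ 2 - mn x| ≤ ‖gradient (ω ε) x‖ ^ 2 + mn x :=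
          abs_sub_le_of_nonneg_of_le hgnn (le_add_of_nonneg_right (hmn_nonneg x)) (hmn_nonneg x) (le_add_of_nonneg_left (sq_nonneg _))
        rw [hφx, hψx, mul_add]
        have := hmn_nonneg x
        linarith [habs2, hmnle, hg]
      · have hg0 : ‖gradient (ω ε) x‖ ^ 2 = 0 := by rw [hout x hxR]; simp
        have hmem1 : x ∉ Metric.closedBall (0 : EuclideanSpace ℝ (Fin n)) R \ Metric.ball 0 ρ := fun hmem =>
          absurd (mem_closedBall_zero_iff.mp hmem.1) (not_le.mpr hxR)
        have hφx : φ x = 0 + ψ x := by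
          simp only [hφ_def, Set.indicator_of_notMem hmem1]
        rw [hg0, zero_sub, abs_neg, abs_of_nonneg (hmn_nonneg x), hφx, zero_add, hψx]
        exact hmnle
  calc |(∫ x, ‖gradient (ω ε) x‖ ^ 2) - K₁|
      = |∫ x, (‖gradient (ω ε) x‖ ^ 2 - mn x)| := by
        rw [integral_sub hgint hmn_int, hKmain]
    _ ≤ ∫ x, ε ^ s * φ x := by
        rw [← Real.norm_eq_abs]
        exact norm_integral_le_of_norm_le (hφ_int.const_mul _) (ae_of_all _ hpt)
    _ = ε ^ s * ∫ x, φ x := MeasureTheory.integral_const_mul _ _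
    _ ≤ ((∫ x, φ x) + 1) * ε ^ s := by
        rw [mul_comm]
        exact mul_le_mul_of_nonneg_right (by linarith) hεs
end

section
/- Assume n = 4. Then there exists a constant K₃ > 0, depending only on the dimension (not on ζ), and constants C > 0, ε₀ ∈ (0,1) such that for all 0 < ε < ε₀ one has | ∫_{ℝ⁴} ω_ε(x)² dx − K₃ ε |log ε| | ≤ C ε. -/
open MeasureTheory Filter

noncomputable abbrev E4 := EuclideanSpace ℝ (Fin 4)

lemma aux_ftc (ε r₀ : ℝ) (hε : 0 < ε) (_hr : 0 < r₀) :
    ∫ r in (0:ℝ)..r₀, r ^ 3 * (ε / (ε + r ^ 2) ^ 2)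
      = ε / 2 * (Real.log (ε + r₀ ^ 2) + ε / (ε + r₀ ^ 2) - Real.log ε - 1) := by
  have hpos : ∀ r : ℝ, 0 < ε + r ^ 2 := fun r => by positivity
  have hderiv : ∀ r ∈ Set.uIcc (0:ℝ) r₀,
      HasDerivAt (fun r => ε / 2 * (Real.log (ε + r ^ 2) + ε / (ε + r ^ 2)))
        (r ^ 3 * (ε / (ε + r ^ 2) ^ 2)) r := by
    intro r _
    have h1 : HasDerivAt (fun r : ℝ => ε + r ^ 2) (2 * r) r := by
      simpa using (hasDerivAt_pow 2 r).const_add ε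
    have h2 : HasDerivAt (fun r : ℝ => Real.log (ε + r ^ 2)) ((ε + r ^ 2)⁻¹ * (2 * r)) r :=
      by have := (Real.hasDerivAt_log (hpos r).ne').comp r h1; exact this
    have h3 : HasDerivAt (fun r : ℝ => ε / (ε + r ^ 2))
        (-(ε * (2 * r) / (ε + r ^ 2) ^ 2)) r := by
      simpa [div_eq_mul_inv, mul_comm, mul_assoc, mul_left_comm, mul_div_assoc] using
        ((h1.inv (hpos r).ne').const_mul ε)
    have := ((h2.add h3).const_mul (ε / 2))
    refine this.congr_deriv ?_
    have hne := (hpos r).ne'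
    field_simp
    ring
  have hcont : Continuous fun r : ℝ => r ^ 3 * (ε / (ε + r ^ 2) ^ 2) := by
    apply Continuous.mul (by continuity)
    exact continuous_const.div (by continuity) fun r => by positivity
  rw [intervalIntegral.integral_eq_sub_of_hasDerivAt hderiv (hcont.intervalIntegrable 0 r₀)]
  have : Real.log (ε + 0 ^ 2) = Real.log ε := by norm_num
  rw [this]
  have : ε / (ε + (0:ℝ) ^ 2) = 1 := by rw [pow_two]; field_simp; simp
  rw [this]
  ring

lemma aux_polar (ε r₀ : ℝ) (hε : 0 < ε) (hr : 0 < r₀) :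
    ∫ x : E4, (Set.Iio r₀).indicator (fun r => ε / (ε + r ^ 2) ^ 2) ‖x‖
      = 4 * (volume (Metric.ball (0:E4) 1)).toReal *
        (ε / 2 * (Real.log (ε + r₀ ^ 2) + ε / (ε + r₀ ^ 2) - Real.log ε - 1)) := by
  rw [integral_fun_norm_addHaar (volume : Measure E4)
    ((Set.Iio r₀).indicator (fun r => ε / (ε + r ^ 2) ^ 2))]
  have hdim : Module.finrank ℝ E4 = 4 := finrank_euclideanSpace_fin
  rw [hdim]
  have h1 : ∫ y in Set.Ioi (0:ℝ), y ^ (4 - 1) •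
        (Set.Iio r₀).indicator (fun r => ε / (ε + r ^ 2) ^ 2) y
      = ∫ y in Set.Ioi (0:ℝ),
        (Set.Iio r₀).indicator (fun r => r ^ 3 * (ε / (ε + r ^ 2) ^ 2)) y := by
    apply setIntegral_congr_fun measurableSet_Ioi
    intro y _
    by_cases hy : y ∈ Set.Iio r₀ <;>
      simp [Set.indicator_of_mem, Set.indicator_of_notMem, hy, smul_eq_mul]
  rw [h1, setIntegral_indicator measurableSet_Iio]
  have h2 : Set.Ioi (0:ℝ) ∩ Set.Iio r₀ = Set.Ioo 0 r₀ := Set.Ioi_inter_Iio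
  rw [h2, ← integral_Ioc_eq_integral_Ioo,
    ← intervalIntegral.integral_of_le hr.le, aux_ftc ε r₀ hε hr]
  simp only [nsmul_eq_mul, smul_eq_mul, Nat.cast_ofNat, measureReal_def]
  ring

set_option maxHeartbeats 1000000 in
theorem L2_norm_sq_asymptotics_dim_four :
    ∃ K₃ : ℝ, 0 < K₃ ∧
      ∀ ζ : EuclideanSpace ℝ (Fin 4) → ℝ,
        ContDiff ℝ (⊤ : ℕ∞) ζ → HasCompactSupport ζ →
        (∀ x, 0 ≤ ζ x ∧ ζ x ≤ 1) → (∀ᶠ x in nhds 0, ζ x = 1) →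
        ∃ C > (0 : ℝ), ∃ ε₀ ∈ Set.Ioo (0 : ℝ) 1, ∀ ε : ℝ, 0 < ε → ε < ε₀ →
          abs ((∫ x : EuclideanSpace ℝ (Fin 4),
              (ε ^ ((1 : ℝ) / 2) * ζ x / (ε + ‖x‖ ^ 2)) ^ 2)
            - K₃ * ε * |Real.log ε|) ≤ C * ε := by
  classical
  set B1 : ℝ := (volume (Metric.ball (0:E4) 1)).toReal with hB1
  have hB1pos : 0 < B1 :=
    ENNReal.toReal_pos (Metric.measure_ball_pos volume 0 one_pos).ne' measure_ball_lt_top.ne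
  refine ⟨2 * B1, by positivity, ?_⟩
  intro ζ hζsm hζsupp hζ01 hζ1
  obtain ⟨r₀, hr₀, hball⟩ : ∃ r₀ > 0, ∀ x : E4, ‖x‖ < r₀ → ζ x = 1 := by
    rw [Metric.eventually_nhds_iff] at hζ1
    obtain ⟨δ, hδ, h⟩ := hζ1
    exact ⟨δ, hδ, fun x hx => h (by simpa [dist_zero_right] using hx)⟩
  set V : ℝ := (volume (tsupport ζ)).toReal with hV
  have hVnn : 0 ≤ V := ENNReal.toReal_nonneg
  have hVfin : volume (tsupport ζ) < ⊤ := hζsupp.measure_lt_top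
  set M₀ : ℝ := |Real.log (r₀ ^ 2)| + Real.log (1 + r₀ ^ 2) + 1 with hM₀
  have hM₀pos : 0 < M₀ := by
    have h1 : 0 ≤ |Real.log (r₀ ^ 2)| := abs_nonneg _
    have h2 : 0 ≤ Real.log (1 + r₀ ^ 2) := Real.log_nonneg (by nlinarith)
    simp only [hM₀]; linarith
  refine ⟨V / r₀ ^ 4 + 2 * B1 * M₀ + 1, by positivity, 1/2, by norm_num, ?_⟩
  intro ε hε hε2
  have hε1 : ε < 1 := by linarith
  have hpos : ∀ x : E4, (0:ℝ) < ε + ‖x‖ ^ 2 := fun x => by positivity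
  set f : E4 → ℝ := fun x => ζ x ^ 2 * (ε / (ε + ‖x‖ ^ 2) ^ 2) with hf
  set g : E4 → ℝ := fun x => (Set.Iio r₀).indicator (fun r => ε / (ε + r ^ 2) ^ 2) ‖x‖ with hg
  -- step 1 : rewrite the integrand
  have horig : (∫ x : E4, (ε ^ ((1 : ℝ) / 2) * ζ x / (ε + ‖x‖ ^ 2)) ^ 2) = ∫ x : E4, f x := by
    refine integral_congr_ae (Eventually.of_forall fun x => ?_)
    have hsq : (ε ^ ((1:ℝ)/2)) ^ 2 = ε := by
      rw [← Real.rpow_natCast (ε ^ ((1:ℝ)/2)) 2, ← Real.rpow_mul hε.le]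
      norm_num
    simp only [hf]
    rw [div_pow, mul_pow, hsq]
    ring
  -- integrability of f
  have hcont_f : Continuous f := by
    apply (hζsm.continuous.pow 2).mul
    exact continuous_const.div ((continuous_const.add (continuous_norm.pow 2)).pow 2)
      fun x => by positivity
  have hcs_f : HasCompactSupport f := by
    have h1 : HasCompactSupport (fun x => ζ x ^ 2) :=
      hζsupp.comp_left (g := fun t : ℝ => t ^ 2) (by simp)
    exact h1.mul_right
  have hint_f : Integrable f := hcont_f.integrable_of_hasCompactSupport hcs_f
  -- integrability of g
  have hg_eq : g = (Metric.ball (0:E4) r₀).indicator (fun x => ε / (ε + ‖x‖ ^ 2) ^ 2) := by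
    funext x
    by_cases h : ‖x‖ < r₀ <;>
      simp [hg, Set.indicator, Metric.mem_ball, dist_zero_right, h]
  have hint_g : Integrable g := by
    rw [hg_eq, integrable_indicator_iff measurableSet_ball]
    have hc : ContinuousOn (fun x : E4 => ε / (ε + ‖x‖ ^ 2) ^ 2) (Metric.closedBall 0 r₀) :=
      (continuous_const.div ((continuous_const.add (continuous_norm.pow 2)).pow 2)
        fun x => (pow_pos (hpos x) 2).ne').continuousOn
    exact (hc.integrableOn_compact (isCompact_closedBall 0 r₀)).mono_set
      Metric.ball_subset_closedBall
  -- step 3 : |∫ f - ∫ g| ≤ ε / r₀ ^ 4 * V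
  have hbound : ∀ x : E4, ‖f x - g x‖ ≤ (tsupport ζ).indicator (fun _ => ε / r₀ ^ 4) x := by
    intro x
    by_cases hx : ‖x‖ < r₀
    · have h1 : ζ x = 1 := hball x hx
      have h2 : g x = ε / (ε + ‖x‖ ^ 2) ^ 2 := Set.indicator_of_mem (show ‖x‖ ∈ Set.Iio r₀ from hx) _
      have h3 : f x = ε / (ε + ‖x‖ ^ 2) ^ 2 := by simp [hf, h1]
      rw [h3, h2, sub_self, norm_zero]
      exact Set.indicator_nonneg (fun _ _ => by positivity) x
    · have h2 : g x = 0 := Set.indicator_of_notMem (show ‖x‖ ∉ Set.Iio r₀ from hx) _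
      by_cases hxs : x ∈ tsupport ζ
      · have hr4 : r₀ ^ 4 ≤ (ε + ‖x‖ ^ 2) ^ 2 := by
          have h4 : r₀ ≤ ‖x‖ := not_lt.mp hx
          have h5 : r₀ ^ 2 ≤ ε + ‖x‖ ^ 2 := by nlinarith [norm_nonneg x]
          calc r₀ ^ 4 = (r₀ ^ 2) ^ 2 := by ring
            _ ≤ (ε + ‖x‖ ^ 2) ^ 2 := pow_le_pow_left₀ (by positivity) h5 2
        have hfle : f x ≤ ε / r₀ ^ 4 := by
          have hz : ζ x ^ 2 ≤ 1 := by
            obtain ⟨h0, h1⟩ := hζ01 x; nlinarith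
          have : ε / (ε + ‖x‖ ^ 2) ^ 2 ≤ ε / r₀ ^ 4 :=
            div_le_div_of_nonneg_left hε.le (by positivity) hr4
          have hnn : (0:ℝ) ≤ ε / (ε + ‖x‖ ^ 2) ^ 2 := by positivity
          calc f x ≤ 1 * (ε / (ε + ‖x‖ ^ 2) ^ 2) := by
                simp only [hf]; nlinarith
            _ = ε / (ε + ‖x‖ ^ 2) ^ 2 := one_mul _
            _ ≤ ε / r₀ ^ 4 := this
        have hfnn : 0 ≤ f x := by
          simp only [hf]; positivity
        rw [h2, sub_zero, Real.norm_eq_abs, abs_of_nonneg hfnn,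
          Set.indicator_of_mem hxs]
        exact hfle
      · have h3 : ζ x = 0 := image_eq_zero_of_notMem_tsupport hxs
        have h4 : f x = 0 := by simp [hf, h3]
        rw [h4, h2, sub_self, norm_zero, Set.indicator_of_notMem hxs]
  have hint_ind : Integrable ((tsupport ζ).indicator (fun _ : E4 => ε / r₀ ^ 4)) := by
    rw [integrable_indicator_iff (isClosed_tsupport ζ).measurableSet]
    exact integrableOn_const hVfin.ne
  have h3 : |(∫ x, f x) - ∫ x, g x| ≤ ε / r₀ ^ 4 * V := by
    rw [← integral_sub hint_f hint_g]
    calc |∫ x, (f x - g x)| ≤ ∫ x, ‖f x - g x‖ := by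
          rw [← Real.norm_eq_abs]; exact norm_integral_le_integral_norm _
      _ ≤ ∫ x, (tsupport ζ).indicator (fun _ => ε / r₀ ^ 4) x :=
          integral_mono ((hint_f.sub hint_g).norm) hint_ind hbound
      _ = ε / r₀ ^ 4 * V := by
          rw [integral_indicator_const _ (isClosed_tsupport ζ).measurableSet]
          simp [hV, mul_comm, measureReal_def]
  -- step 4 : exact value of ∫ g
  have hgval : (∫ x, g x) = 4 * B1 *
      (ε / 2 * (Real.log (ε + r₀ ^ 2) + ε / (ε + r₀ ^ 2) - Real.log ε - 1)) :=
    aux_polar ε r₀ hε hr₀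
  -- step 5 : |∫ g - 2 B1 ε |log ε|| ≤ 2 B1 M₀ ε
  have hlog : |Real.log ε| = -Real.log ε :=
    abs_of_nonpos (Real.log_nonpos hε.le hε1.le)
  have hM : |Real.log (ε + r₀ ^ 2) + ε / (ε + r₀ ^ 2) - 1| ≤ M₀ := by
    have hd0 : (0:ℝ) < ε + r₀ ^ 2 := by positivity
    have hq0 : 0 ≤ ε / (ε + r₀ ^ 2) := by positivity
    have hq1 : ε / (ε + r₀ ^ 2) ≤ 1 := by
      rw [div_le_one hd0]; nlinarith
    have hlogl : Real.log (r₀ ^ 2) ≤ Real.log (ε + r₀ ^ 2) :=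
      Real.log_le_log (by positivity) (by linarith)
    have hlogu : Real.log (ε + r₀ ^ 2) ≤ Real.log (1 + r₀ ^ 2) :=
      Real.log_le_log hd0 (by linarith)
    have h2 : 0 ≤ Real.log (1 + r₀ ^ 2) := Real.log_nonneg (by nlinarith)
    have habs : |Real.log (ε + r₀ ^ 2)| ≤ |Real.log (r₀ ^ 2)| + Real.log (1 + r₀ ^ 2) := by
      rw [abs_le]
      constructor
      · have := neg_abs_le (Real.log (r₀ ^ 2)); linarith
      · have := abs_nonneg (Real.log (r₀ ^ 2)); linarith
    calc |Real.log (ε + r₀ ^ 2) + ε / (ε + r₀ ^ 2) - 1|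
        ≤ |Real.log (ε + r₀ ^ 2)| + |ε / (ε + r₀ ^ 2) - 1| := by
          have := abs_add_le (Real.log (ε + r₀ ^ 2)) (ε / (ε + r₀ ^ 2) - 1)
          simpa [add_sub_assoc] using this
      _ ≤ (|Real.log (r₀ ^ 2)| + Real.log (1 + r₀ ^ 2)) + 1 := by
          have h1 : |ε / (ε + r₀ ^ 2) - 1| ≤ 1 := abs_le.mpr ⟨by linarith, by linarith⟩
          linarith
      _ = M₀ := by rw [hM₀]
  have h5 : abs ((∫ x, g x) - 2 * B1 * ε * |Real.log ε|) ≤ 2 * B1 * M₀ * ε := by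
    rw [hgval, hlog]
    have heq : 4 * B1 * (ε / 2 * (Real.log (ε + r₀ ^ 2) + ε / (ε + r₀ ^ 2) - Real.log ε - 1))
        - 2 * B1 * ε * (-Real.log ε)
        = 2 * B1 * ε * (Real.log (ε + r₀ ^ 2) + ε / (ε + r₀ ^ 2) - 1) := by ring
    rw [heq, abs_mul, abs_of_nonneg (show (0:ℝ) ≤ 2 * B1 * ε by positivity)]
    calc 2 * B1 * ε * |Real.log (ε + r₀ ^ 2) + ε / (ε + r₀ ^ 2) - 1|
        ≤ 2 * B1 * ε * M₀ := by
          exact mul_le_mul_of_nonneg_left hM (by positivity)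
      _ = 2 * B1 * M₀ * ε := by ring
  -- combine
  rw [horig]
  calc abs ((∫ x, f x) - 2 * B1 * ε * |Real.log ε|)
      ≤ |(∫ x, f x) - ∫ x, g x| + abs ((∫ x, g x) - 2 * B1 * ε * |Real.log ε|) :=
        abs_sub_le _ _ _
    _ ≤ ε / r₀ ^ 4 * V + 2 * B1 * M₀ * ε := add_le_add h3 h5
    _ ≤ (V / r₀ ^ 4 + 2 * B1 * M₀ + 1) * ε := by
        have : ε / r₀ ^ 4 * V = V / r₀ ^ 4 * ε := by ring
        rw [this]; nlinarith
end
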